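/- For any t ∈ ℝ and ω > 0, the integral ∫_{-∞}^{∞} e^{-i p t} / (p² + ω²) dp equals (π/ω) e^{-|t| ω}. -/

import Mathlib

/-!
The function `x ↦ exp (-a|x|)` is elementary to Fourier transform: splitting the integral at `0`
gives `1 / (a + iξ) + 1 / (a - iξ) = 2a / (a² + ξ²)`. This Lorentzian is integrable, so Fourier
inversion recovers `exp (-a|x|)` from it, which after the substitution `p = 2πξ` is the claimed
integral.
-/

open MeasureTheory Complex Real Set
open scoped FourierTransform

section ExpNegMulAbs

variable {a : ℝ}

lemma integrable_exp_neg_mul_abs (ha : 0 < a) :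
    Integrable fun x : ℝ => Real.exp (-(a * |x|)) := by
  rw [← integrableOn_univ, ← Iic_union_Ioi (a := (0 : ℝ))]
  refine IntegrableOn.union ?_ ?_
  · refine (integrableOn_exp_mul_Iic ha 0).congr_fun (fun x hx => ?_) measurableSet_Iic
    simp [abs_of_nonpos (mem_Iic.mp hx)]
  · refine (integrableOn_exp_mul_Ioi (neg_neg_of_pos ha) 0).congr_fun (fun x hx => ?_)
      measurableSet_Ioi
    simp [abs_of_pos (mem_Ioi.mp hx)]

lemma integral_cexp_mul_I_mul_exp_neg_mul_abs (ha : 0 < a) (ξ : ℝ) :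
    ∫ x : ℝ, cexp (ξ * x * I) * Real.exp (-(a * |x|)) = 2 * a / (a ^ 2 + ξ ^ 2) := by
  set F : ℝ → ℂ := fun x => cexp (ξ * x * I) * Real.exp (-(a * |x|))
  have hIic : EqOn F (fun x : ℝ => cexp ((a + ξ * I) * x)) (Iic 0) := fun x hx => by
    simp only [F, abs_of_nonpos (mem_Iic.mp hx), ofReal_exp, ← Complex.exp_add]
    congr 1; push_cast; ring
  have hIoi : EqOn F (fun x : ℝ => cexp ((-a + ξ * I) * x)) (Ioi 0) := fun x hx => by
    simp only [F, abs_of_pos (mem_Ioi.mp hx), ofReal_exp, ← Complex.exp_add]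
    congr 1; push_cast; ring
  have hre₁ : 0 < (a + ξ * I).re := by simpa using ha
  have hre₂ : (-a + ξ * I).re < 0 := by simpa using ha
  have hint₁ : IntegrableOn F (Iic 0) :=
    (integrableOn_exp_mul_complex_Iic hre₁ 0).congr_fun hIic.symm measurableSet_Iic
  have hint₂ : IntegrableOn F (Ioi 0) :=
    (integrableOn_exp_mul_complex_Ioi hre₂ 0).congr_fun hIoi.symm measurableSet_Ioi
  have hne₁ : a + ξ * I ≠ 0 := fun h => by simp [h] at hre₁
  have hne₂ : -a + ξ * I ≠ 0 := fun h => by simp [h] at hre₂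
  have hden : (a : ℂ) ^ 2 + ξ ^ 2 ≠ 0 := by exact_mod_cast (by positivity : a ^ 2 + ξ ^ 2 ≠ 0)
  rw [← intervalIntegral.integral_Iic_add_Ioi hint₁ hint₂,
    setIntegral_congr_fun measurableSet_Iic hIic, setIntegral_congr_fun measurableSet_Ioi hIoi,
    integral_exp_mul_complex_Iic hre₁, integral_exp_mul_complex_Ioi hre₂]
  simp only [ofReal_zero, mul_zero, Complex.exp_zero]
  field_simp
  linear_combination (-2 * a * ξ ^ 2 : ℂ) * I_sq

lemma fourier_exp_neg_mul_abs (ha : 0 < a) :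
    𝓕 (fun x : ℝ => (Real.exp (-(a * |x|)) : ℂ)) =
      fun ξ => ((2 * a / (a ^ 2 + (2 * π * ξ) ^ 2) : ℝ) : ℂ) := by
  ext ξ
  rw [Real.fourier_real_eq_integral_exp_smul]
  convert integral_cexp_mul_I_mul_exp_neg_mul_abs ha (-(2 * π * ξ)) using 1
  · simp only [smul_eq_mul]
    congr! 4
    push_cast
    ring
  · push_cast
    ring

lemma integrable_fourier_exp_neg_mul_abs (ha : 0 < a) :
    Integrable (𝓕 (fun x : ℝ => (Real.exp (-(a * |x|)) : ℂ))) := by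
  have hc : 2 * π / a ≠ 0 := by positivity
  have : Integrable fun ξ : ℝ => 2 * a / (a ^ 2 + (2 * π * ξ) ^ 2) :=
    ((integrable_inv_one_add_sq.comp_mul_left' hc).const_mul (2 / a)).congr
      (Filter.Eventually.of_forall fun ξ => by field_simp)
  rw [fourier_exp_neg_mul_abs ha]
  exact this.ofReal

theorem integral_cexp_mul_I_div_sq_add_sq (ha : 0 < a) (x : ℝ) :
    ∫ p : ℝ, cexp (p * x * I) / (p ^ 2 + a ^ 2) = (π / a * Real.exp (-(a * |x|)) : ℝ) := by
  set g : ℝ → ℂ := fun x => (Real.exp (-(a * |x|)) : ℂ)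
  have hinv : 𝓕⁻ (𝓕 g) x = g x :=
    (integrable_exp_neg_mul_abs ha).ofReal.fourierInv_fourier_eq
      (integrable_fourier_exp_neg_mul_abs ha) (by fun_prop)
  rw [Real.fourierInv_eq', fourier_exp_neg_mul_abs ha] at hinv
  set f : ℝ → ℂ := fun p => cexp (p * x * I) / (p ^ 2 + a ^ 2)
  have hscale : ∀ v : ℝ, cexp (↑(2 * π * inner ℝ v x) * I) •
      ((2 * a / (a ^ 2 + (2 * π * v) ^ 2) : ℝ) : ℂ) = 2 * a * f (2 * π * v) := fun v => by
    simp only [f, Real.inner_apply, smul_eq_mul]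
    push_cast
    field_simp
    ring_nf
  simp_rw [hscale, integral_const_mul, Measure.integral_comp_mul_left f, g] at hinv
  rw [abs_of_pos (by positivity)] at hinv
  have ha' : (a : ℂ) ≠ 0 := ofReal_ne_zero.mpr ha.ne'
  rw [ofReal_mul, ← hinv, real_smul]
  push_cast
  field_simp

end ExpNegMulAbs

/-- For any `t ∈ ℝ` and `ω > 0`,
`∫ p, exp (-i p t) / (p² + ω²) dp = (π / ω) · exp (-|t| ω)`. -/
theorem integral_exp_neg_mul_I_div_sq_add_sq (t ω : ℝ) (hω : 0 < ω) :
    ∫ p : ℝ, Complex.exp (-(Complex.I * p * t)) / ((p : ℂ) ^ 2 + (ω : ℂ) ^ 2) =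
      ((Real.pi / ω) * Real.exp (-(|t| * ω)) : ℝ) := by
  rw [← abs_neg t, mul_comm _ ω, ← integral_cexp_mul_I_div_sq_add_sq hω (-t)]
  congr 1 with p
  push_cast
  ring_nf
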